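/- arXiv:2106.04485 — 4 statements merged into one kernel-verified Lean document; each statement's English description precedes it below -/
import Mathlib

section
/- Let M : ℝ → Mat(n×n, ℝ) be differentiable with det(M(t)) = 0 for all t, and suppose M(0) has nullity 1 with left kernel vector l and right kernel vector r. Then l · M'(0) · r = 0. -/
open Matrix

private lemma kernel_char {n : ℕ} (A : Matrix (Fin n) (Fin n) ℝ) (hrank : A.rank = n - 1)
    (hn : 1 ≤ n) (r : Fin n → ℝ) (hr : r ≠ 0) (hAr : A *ᵥ r = 0) :
    ∀ v, A *ᵥ v = 0 → ∃ c : ℝ, v = c • r := by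
  have hker : LinearMap.ker A.mulVecLin = Submodule.span ℝ {r} := by
    have hrn := A.mulVecLin.finrank_range_add_finrank_ker
    have hpi : Module.finrank ℝ (Fin n → ℝ) = n := by simp
    rw [Matrix.rank] at hrank
    have h1 : Module.finrank ℝ (LinearMap.ker A.mulVecLin) = 1 := by omega
    have hle : Submodule.span ℝ {r} ≤ LinearMap.ker A.mulVecLin := by
      rw [Submodule.span_le, Set.singleton_subset_iff]
      exact LinearMap.mem_ker.mpr hAr
    exact (Submodule.eq_of_le_of_finrank_le hle
      (by rw [h1, finrank_span_singleton hr])).symm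
  intro v hv
  have : v ∈ Submodule.span ℝ {r} := by
    rw [← hker]; exact LinearMap.mem_ker.mpr hv
  exact (Submodule.mem_span_singleton.mp this).imp fun c hc => hc.symm

private lemma det_path_deriv {n : ℕ} (M : ℝ → Matrix (Fin n) (Fin n) ℝ)
    (hdiff : ∀ i j, DifferentiableAt ℝ (fun t => M t i j) 0)
    (M' : Matrix (Fin n) (Fin n) ℝ)
    (hM' : ∀ i j, M' i j = deriv (fun t => M t i j) 0) :
    HasDerivAt (fun t => (M t).det)
      (∑ σ : Equiv.Perm (Fin n), ((Equiv.Perm.sign σ : ℤ) : ℝ) *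
        ∑ i, (∏ j ∈ Finset.univ.erase i, M 0 (σ j) j) * M' (σ i) i) 0 := by
  have he : (fun t => (M t).det) = fun t => ∑ σ : Equiv.Perm (Fin n),
      ((Equiv.Perm.sign σ : ℤ) : ℝ) * ∏ i, M t (σ i) i := by
    funext t; rw [Matrix.det_apply']
  rw [he]
  apply HasDerivAt.fun_sum
  intro σ _
  have hp : HasDerivAt (fun t => ∏ i, M t (σ i) i)
      (∑ i, (∏ j ∈ Finset.univ.erase i, M 0 (σ j) j) • M' (σ i) i) 0 := by
    apply HasDerivAt.fun_finsetProd
    intro i _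
    rw [hM']
    exact (hdiff (σ i) i).hasDerivAt
  simpa [smul_eq_mul, Finset.mul_sum] using hp.const_mul (((Equiv.Perm.sign σ : ℤ) : ℝ))

private lemma sum_perm_eq_adj {n : ℕ} (A : Matrix (Fin n) (Fin n) ℝ) (i : Fin n)
    (v : Fin n → ℝ) :
    ∑ σ : Equiv.Perm (Fin n), ((Equiv.Perm.sign σ : ℤ) : ℝ) *
      ((∏ j ∈ Finset.univ.erase i, A (σ j) j) * v (σ i))
    = ∑ k, adjugate A i k * v k := by
  have h2 : (A.updateCol i v).det = ∑ σ : Equiv.Perm (Fin n),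
      ((Equiv.Perm.sign σ : ℤ) : ℝ) * ∏ j, A.updateCol i v (σ j) j :=
    Matrix.det_apply' _
  have h3 : ∀ σ : Equiv.Perm (Fin n),
      ∏ j, A.updateCol i v (σ j) j = v (σ i) * ∏ j ∈ Finset.univ.erase i, A (σ j) j := by
    intro σ
    rw [← Finset.mul_prod_erase Finset.univ _ (Finset.mem_univ i)]
    congr 1
    · simp [Matrix.updateCol_apply]
    · exact Finset.prod_congr rfl fun j hj => by
        simp [Matrix.updateCol_apply, Finset.ne_of_mem_erase hj]
  have h4 : (A.updateCol i v).det = (adjugate A *ᵥ v) i := by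
    rw [← Matrix.cramer_apply, Matrix.cramer_eq_adjugate_mulVec]
  calc ∑ σ : Equiv.Perm (Fin n), ((Equiv.Perm.sign σ : ℤ) : ℝ) *
      ((∏ j ∈ Finset.univ.erase i, A (σ j) j) * v (σ i))
      = (A.updateCol i v).det := by
        rw [h2]; exact Finset.sum_congr rfl fun σ _ => by rw [h3 σ]; ring
    _ = ∑ k, adjugate A i k * v k := by rw [h4]; simp [Matrix.mulVec, dotProduct]

private lemma det_update_ne_zero {n : ℕ} (A : Matrix (Fin n) (Fin n) ℝ)
    (r : Fin n → ℝ) (hkr : ∀ v, A *ᵥ v = 0 → ∃ c : ℝ, v = c • r)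
    (j0 : Fin n) (hrj0 : r j0 ≠ 0)
    (u : Fin n → ℝ) (hu : u ∉ LinearMap.range A.mulVecLin) :
    (A.updateCol j0 u).det ≠ 0 := by
  intro hdet
  obtain ⟨v, hv0, hv⟩ := Matrix.exists_mulVec_eq_zero_iff.mpr hdet
  have hsplit : ∀ i, (A.updateCol j0 u *ᵥ v) i
      - (A *ᵥ Function.update v j0 0) i = v j0 * u i := by
    intro i
    rw [Matrix.mulVec, Matrix.mulVec, dotProduct, dotProduct, ← Finset.sum_sub_distrib]
    rw [Finset.sum_eq_single j0]
    · simp [Matrix.updateCol_apply, mul_comm]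
    · intro j _ hj
      simp [Matrix.updateCol_apply, hj, Function.update_of_ne hj]
    · simp
  have hAw : A *ᵥ Function.update v j0 0 = -(v j0) • u := by
    funext i
    have := hsplit i
    rw [hv] at this
    simp only [Pi.zero_apply, zero_sub, neg_eq_iff_eq_neg] at this
    simp [this, mul_comm]
  by_cases hvj : v j0 = 0
  · have hveq : Function.update v j0 0 = v := by
      rw [Function.update_eq_self_iff]; exact hvj.symm
    rw [hveq, hvj] at hAw
    simp only [neg_zero, zero_smul] at hAw
    obtain ⟨c, hc⟩ := hkr v hAw
    have : c = 0 := by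
      have := congrFun hc j0
      rw [hvj] at this
      simp at this
      rcases this with h | h
      · exact h
      · exact absurd h hrj0
    rw [this, zero_smul] at hc
    exact hv0 hc
  · apply hu
    refine ⟨(-(v j0))⁻¹ • Function.update v j0 0, ?_⟩
    rw [_root_.map_smul, Matrix.mulVecLin_apply, hAw, smul_smul,
      inv_mul_cancel₀ (by simpa using hvj), one_smul]

/-- If `M(t)` is a differentiable path of singular matrices and `M(0)`
has nullity 1 with left kernel vector `l` and right kernel vector `r`, then
`l · M'(0) · r = 0`. -/
theorem kernel_pairing_vanishes {n : ℕ} (hn : 1 ≤ n)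
    (M : ℝ → Matrix (Fin n) (Fin n) ℝ)
    (hdiff : ∀ i j, DifferentiableAt ℝ (fun t => M t i j) 0)
    (hsing : ∀ t, (M t).det = 0)
    (hrank : (M 0).rank = n - 1)
    (l r : Fin n → ℝ) (hl : l ≠ 0) (hr : r ≠ 0)
    (hlM : l ᵥ* (M 0) = 0) (hMr : (M 0) *ᵥ r = 0)
    (M' : Matrix (Fin n) (Fin n) ℝ)
    (hM' : ∀ i j, M' i j = deriv (fun t => M t i j) 0) :
    l ⬝ᵥ (M' *ᵥ r) = 0 := by
  classical
  set A := M 0 with hA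
  have hkr : ∀ v, A *ᵥ v = 0 → ∃ c : ℝ, v = c • r := kernel_char A hrank hn r hr hMr
  have hkl : ∀ v, v ᵥ* A = 0 → ∃ c : ℝ, v = c • l := by
    have hrt : Aᵀ.rank = n - 1 := by rw [Matrix.rank_transpose]; exact hrank
    have h := kernel_char Aᵀ hrt hn l hl (by rw [Matrix.mulVec_transpose]; exact hlM)
    intro v hv
    exact h v (by rw [Matrix.mulVec_transpose]; exact hv)
  have hdet0 : A.det = 0 := hsing 0
  -- adjugate columns lie in the right kernel
  have hcols : ∀ j, A *ᵥ (fun i => adjugate A i j) = 0 := by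
    intro j
    funext i
    have h2 := congrFun (congrFun (Matrix.mul_adjugate A) i) j
    rw [hdet0, zero_smul] at h2
    simpa [Matrix.mul_apply, Matrix.mulVec, dotProduct] using h2
  -- adjugate rows lie in the left kernel
  have hrows : ∀ i, (fun j => adjugate A i j) ᵥ* A = 0 := by
    intro i
    funext j
    have h2 := congrFun (congrFun (Matrix.adjugate_mul A) i) j
    rw [hdet0, zero_smul] at h2
    simpa [Matrix.mul_apply, Matrix.vecMul, dotProduct] using h2
  choose c hc using fun j => hkr _ (hcols j)
  choose d hd using fun i => hkl _ (hrows i)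
  obtain ⟨i0, hri0⟩ : ∃ i, r i ≠ 0 := Function.ne_iff.mp hr
  set α : ℝ := d i0 / r i0 with hαdef
  have hadj : ∀ i j, adjugate A i j = α * r i * l j := by
    intro i j
    have h1 : adjugate A i j = c j * r i := by
      have := congrFun (hc j) i; simpa using this
    have h2 : adjugate A i0 j = c j * r i0 := by
      have := congrFun (hc j) i0; simpa using this
    have h3 : adjugate A i0 j = d i0 * l j := by
      have := congrFun (hd i0) j; simpa using this
    have hcj : c j = d i0 * l j / r i0 := by
      rw [eq_div_iff hri0, ← h2, h3]
    rw [h1, hcj, hαdef]; ring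
  -- α ≠ 0
  have hrne : LinearMap.range A.mulVecLin ≠ ⊤ := by
    intro htop
    have h1 : Module.finrank ℝ (LinearMap.range A.mulVecLin) = n := by
      rw [htop]; simp
    rw [Matrix.rank] at hrank
    omega
  obtain ⟨u, hu⟩ : ∃ u, u ∉ LinearMap.range A.mulVecLin := by
    by_contra h; push_neg at h; exact hrne (Submodule.eq_top_iff'.mpr h)
  have hdu := det_update_ne_zero A r hkr i0 hri0 u hu
  have hcram : (A.updateCol i0 u).det = ∑ k, adjugate A i0 k * u k := by
    rw [← Matrix.cramer_apply, Matrix.cramer_eq_adjugate_mulVec]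
    simp [Matrix.mulVec, dotProduct]
  have hα : α ≠ 0 := by
    intro h0
    apply hdu
    rw [hcram]
    apply Finset.sum_eq_zero; intro k _; rw [hadj, h0]; ring
  -- Jacobi's formula: the derivative of the constant-zero determinant
  have hder := det_path_deriv M hdiff M' hM'
  have hzero : HasDerivAt (fun t => (M t).det) 0 0 := by
    have : (fun t => (M t).det) = fun _ => (0:ℝ) := funext hsing
    rw [this]; exact hasDerivAt_const 0 0
  have hD : (∑ σ : Equiv.Perm (Fin n), ((Equiv.Perm.sign σ : ℤ) : ℝ) *
        ∑ i, (∏ j ∈ Finset.univ.erase i, M 0 (σ j) j) * M' (σ i) i) = 0 :=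
    hder.unique hzero
  have htr : ∑ i, ∑ k, adjugate A i k * M' k i = 0 := by
    calc ∑ i, ∑ k, adjugate A i k * M' k i
        = ∑ i, ∑ σ : Equiv.Perm (Fin n), ((Equiv.Perm.sign σ : ℤ) : ℝ) *
            ((∏ j ∈ Finset.univ.erase i, A (σ j) j) * M' (σ i) i) := by
          exact Finset.sum_congr rfl fun i _ =>
            (sum_perm_eq_adj A i (fun k => M' k i)).symm
      _ = ∑ σ : Equiv.Perm (Fin n), ∑ i, ((Equiv.Perm.sign σ : ℤ) : ℝ) *
            ((∏ j ∈ Finset.univ.erase i, A (σ j) j) * M' (σ i) i) := Finset.sum_comm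
      _ = ∑ σ : Equiv.Perm (Fin n), ((Equiv.Perm.sign σ : ℤ) : ℝ) *
            ∑ i, (∏ j ∈ Finset.univ.erase i, M 0 (σ j) j) * M' (σ i) i := by
          exact Finset.sum_congr rfl fun σ _ => by rw [Finset.mul_sum]
      _ = 0 := hD
  have hfinal : ∑ i, ∑ k, adjugate A i k * M' k i = α * (l ⬝ᵥ (M' *ᵥ r)) := by
    simp only [hadj, dotProduct, Matrix.mulVec, Finset.mul_sum]
    rw [Finset.sum_comm]
    exact Finset.sum_congr rfl fun k _ => Finset.sum_congr rfl fun i _ => by ring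
  rw [hfinal] at htr
  exact (mul_eq_zero.mp htr).resolve_left hα
end

section
/- Let R : ℝ^N → Mat(N×N, ℝ) be linear, and let p ∈ ℝ^N with nullity(R(p)) = 1, with left kernel row vector ω and right kernel vector p′. Then the following are equivalent: (i) ω · R(p′) · p′ ≠ 0 (prestress stability certificate); (ii) the directional derivative of p ↦ det(R(p)) at p in direction p′ is nonzero (transverse rigidity certificate). -/
open Matrix

section Aux

variable {N : ℕ}

lemma det_add_smul_expand (A B : Matrix (Fin N) (Fin N) ℝ) (t : ℝ) :
    (A + t • B).det = ∑ s : Finset (Fin N),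
      t ^ s.card * (Matrix.of fun i j => if i ∈ s then B i j else A i j).det := by
  classical
  have key := (Matrix.detRowAlternating :
      (Fin N → ℝ) [⋀^Fin N]→ₗ[ℝ] ℝ).toMultilinearMap.map_add_univ
      (fun i => t • B i) (fun i => A i)
  have h1 : (A + t • B).det =
      (Matrix.detRowAlternating : (Fin N → ℝ) [⋀^Fin N]→ₗ[ℝ] ℝ).toMultilinearMap
        ((fun i => t • B i) + fun i => A i) := by
    have : (A + t • B) = ((fun i => t • B i) + fun i => A i : Matrix (Fin N) (Fin N) ℝ) := by
      funext i j
      simp [add_comm, Matrix.add_apply, Matrix.smul_apply]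
    rw [show (A + t • B).det = Matrix.detRowAlternating (A + t • B) from rfl, this]
    rfl
  rw [h1, key]
  refine Finset.sum_congr rfl fun s _ => ?_
  have h2 : s.piecewise (fun i => t • B i) (fun i => A i) =
      fun i => (if i ∈ s then t else 1) • (s.piecewise (fun i => B i) (fun i => A i)) i := by
    funext i
    by_cases h : i ∈ s <;> simp [Finset.piecewise, h]
  rw [h2, MultilinearMap.map_smul_univ]
  have h3 : (∏ i, if i ∈ s then t else (1:ℝ)) = t ^ s.card := by
    rw [Finset.prod_ite_mem, Finset.univ_inter, Finset.prod_const]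
  rw [h3]
  have h4 : s.piecewise (fun i => B i) (fun i => A i) =
      fun i j => if i ∈ s then B i j else A i j := by
    funext i j
    by_cases h : i ∈ s <;> simp [Finset.piecewise, h]
  rw [h4]
  simp only [smul_eq_mul]
  rfl

end Aux

section Aux2
variable {N : ℕ}

lemma sum_singletons {M : Type*} [AddCommMonoid M] (c : Finset (Fin N) → M) :
    ∑ s : Finset (Fin N) with s.card = 1, c s = ∑ i : Fin N, c {i} := by
  classical
  have himg : (Finset.univ.filter fun s : Finset (Fin N) => s.card = 1)
      = Finset.univ.image (fun i : Fin N => ({i} : Finset (Fin N))) := by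
    ext s
    simp only [Finset.mem_filter, Finset.mem_univ, true_and, Finset.mem_image,
      Finset.card_eq_one]
    tauto
  rw [himg, Finset.sum_image (fun x _ y _ h => Finset.singleton_injective h)]

lemma deriv_sum_pow_card (c : Finset (Fin N) → ℝ) :
    deriv (fun t : ℝ => ∑ s : Finset (Fin N), t ^ s.card * c s) 0
      = ∑ i : Fin N, c {i} := by
  classical
  have h : HasDerivAt (fun t : ℝ => ∑ s : Finset (Fin N), t ^ s.card * c s)
      (∑ s : Finset (Fin N), if s.card = 1 then c s else 0) 0 := by
    apply HasDerivAt.fun_sum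
    intro s _
    have hds := (hasDerivAt_pow s.card (0:ℝ)).mul_const (c s)
    convert hds using 1
    · rfl
    rcases hk : s.card with _ | k
    · simp
    · rcases k with _ | k
      · simp
      · simp [zero_pow]
  rw [h.deriv, ← Finset.sum_filter, sum_singletons]

lemma sum_card_le_one {M : Type*} [AddCommMonoid M] (f : Finset (Fin N) → M)
    (hf : ∀ s : Finset (Fin N), 2 ≤ s.card → f s = 0) :
    ∑ s : Finset (Fin N), f s = f ∅ + ∑ i : Fin N, f {i} := by
  classical
  have : ∑ s : Finset (Fin N), f s
      = ∑ s : Finset (Fin N), ((if s.card = 0 then f s else 0) + if s.card = 1 then f s else 0) := by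
    refine Finset.sum_congr rfl fun s _ => ?_
    by_cases h0 : s.card = 0
    · simp [h0]
    · by_cases h1 : s.card = 1
      · simp [h0, h1]
      · rw [hf s (by omega)]
        simp [h0, h1]
  rw [this, Finset.sum_add_distrib, ← Finset.sum_filter, ← Finset.sum_filter, sum_singletons]
  congr 1
  have : (Finset.univ.filter fun s : Finset (Fin N) => s.card = 0) = {∅} := by
    ext s; simp [Finset.card_eq_zero]
  rw [this, Finset.sum_singleton]

lemma det_updateRow_adj (A : Matrix (Fin N) (Fin N) ℝ) (i : Fin N) (b : Fin N → ℝ) :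
    (A.updateRow i b).det = ∑ k, A.adjugate k i * b k := by
  classical
  rw [← Matrix.cramer_transpose_apply]
  rw [Matrix.cramer_eq_adjugate_mulVec, ← Matrix.adjugate_transpose]
  simp [Matrix.mulVec, dotProduct, Matrix.transpose_apply]

lemma piecewise_single_eq (A B : Matrix (Fin N) (Fin N) ℝ) (i : Fin N) :
    (Matrix.of fun k j => if k ∈ ({i} : Finset (Fin N)) then B k j else A k j)
      = A.updateRow i (B i) := by
  funext k j
  by_cases h : k = i
  · subst h; simp
  · simp [h, Matrix.updateRow_apply]

lemma deriv_det_add_smul (A B : Matrix (Fin N) (Fin N) ℝ) :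
    deriv (fun t : ℝ => (A + t • B).det) 0 = ∑ i, (A.updateRow i (B i)).det := by
  classical
  simp only [det_add_smul_expand]
  rw [deriv_sum_pow_card (fun s => (Matrix.of fun i j => if i ∈ s then B i j else A i j).det)]
  exact Finset.sum_congr rfl fun i _ => by rw [piecewise_single_eq]

end Aux2

section Aux3
open Module
variable {N : ℕ}

lemma ker_structure (A : Matrix (Fin N) (Fin N) ℝ) (hrank : A.rank = N - 1)
    (v : Fin N → ℝ) (hv : v ≠ 0) (hAv : A *ᵥ v = 0) :
    ∀ x, A *ᵥ x = 0 → ∃ c : ℝ, x = c • v := by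
  classical
  have hrr : finrank ℝ (LinearMap.range A.mulVecLin) = N - 1 := hrank
  have hsum := LinearMap.finrank_range_add_finrank_ker A.mulVecLin
  have hN : 1 ≤ N := by
    by_contra h
    have : N = 0 := by omega
    subst this
    exact hv (funext fun i => absurd i.2 (by omega))
  have hker : finrank ℝ (LinearMap.ker A.mulVecLin) = 1 := by
    rw [hrr, Module.finrank_pi, Fintype.card_fin] at hsum
    omega
  have hle : (ℝ ∙ v) ≤ LinearMap.ker A.mulVecLin := by
    rw [Submodule.span_singleton_le_iff_mem, LinearMap.mem_ker, Matrix.mulVecLin_apply]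
    exact hAv
  have heq : (ℝ ∙ v) = LinearMap.ker A.mulVecLin :=
    Submodule.eq_of_le_of_finrank_le hle (by rw [hker, finrank_span_singleton hv])
  intro x hx
  have hmem : x ∈ (ℝ ∙ v) := by
    rw [heq, LinearMap.mem_ker, Matrix.mulVecLin_apply]
    exact hx
  obtain ⟨c, hc⟩ := Submodule.mem_span_singleton.mp hmem
  exact ⟨c, hc.symm⟩

end Aux3

/-- prestress-stability certificate `ω R(p′) p′ ≠ 0` is equivalent to
the transverse-rigidity certificate `d/dt|₀ det(R(p + t p′)) ≠ 0`. -/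
theorem prestress_iff_transverse {N : ℕ} (hN : 1 ≤ N)
    (R : (Fin N → ℝ) →ₗ[ℝ] Matrix (Fin N) (Fin N) ℝ)
    (p : Fin N → ℝ) (hrank : (R p).rank = N - 1)
    (ω p' : Fin N → ℝ) (hω : ω ≠ 0) (hp' : p' ≠ 0)
    (hωR : ω ᵥ* (R p) = 0) (hRp' : (R p) *ᵥ p' = 0) :
    ω ⬝ᵥ ((R p') *ᵥ p') ≠ 0 ↔ deriv (fun t : ℝ => (R (p + t • p')).det) 0 ≠ 0 := by
  classical
  set A := R p with hA
  set B := R p' with hB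
  have hdetA : A.det = 0 := Matrix.exists_mulVec_eq_zero_iff.mp ⟨p', hp', hRp'⟩
  have hker := ker_structure A hrank p' hp' hRp'
  have hrankT : Aᵀ.rank = N - 1 := by rw [Matrix.rank_transpose]; exact hrank
  have hωT : Aᵀ *ᵥ ω = 0 := by rw [Matrix.mulVec_transpose]; exact hωR
  have hkerT := ker_structure Aᵀ hrankT ω hω hωT
  have hAadj : A * A.adjugate = 0 := by rw [Matrix.mul_adjugate, hdetA, zero_smul]
  have hadjA : A.adjugate * A = 0 := by rw [Matrix.adjugate_mul, hdetA, zero_smul]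
  have hcol : ∀ j, ∃ c : ℝ, (fun i => A.adjugate i j) = c • p' := by
    intro j
    apply hker
    ext i
    have h : (A *ᵥ fun k => A.adjugate k j) i = (A * A.adjugate) i j := by
      simp [Matrix.mulVec, Matrix.mul_apply, dotProduct]
    rw [h, hAadj]
    simp
  choose c hc using hcol
  have hrowadj : ∀ i, ∃ e : ℝ, (fun j => A.adjugate i j) = e • ω := by
    intro i
    apply hkerT
    ext j
    have h : (Aᵀ *ᵥ fun k => A.adjugate i k) j = (A.adjugate * A) i j := by
      simp [Matrix.mulVec, Matrix.mul_apply, dotProduct, Matrix.transpose_apply,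
        mul_comm]
    rw [h, hadjA]
    simp
  choose d hd using hrowadj
  obtain ⟨i₀, hi₀⟩ : ∃ i, p' i ≠ 0 := by
    by_contra h
    push_neg at h
    exact hp' (funext h)
  set α := d i₀ / p' i₀ with hαdef
  have hadj : ∀ i j, A.adjugate i j = α * ω j * p' i := by
    intro i j
    have h1 : A.adjugate i j = c j * p' i := by simpa using congrFun (hc j) i
    have h3 : A.adjugate i₀ j = c j * p' i₀ := by simpa using congrFun (hc j) i₀
    have h2 : A.adjugate i₀ j = d i₀ * ω j := by simpa using congrFun (hd i₀) j
    have hkey : c j * p' i₀ = d i₀ * ω j := h3.symm.trans h2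
    have hcj : c j = α * ω j := by
      rw [hαdef]
      field_simp
      linear_combination hkey
    rw [h1, hcj]
  have hsum : ∀ C : Matrix (Fin N) (Fin N) ℝ,
      ∑ i, (A.updateRow i (C i)).det = α * (ω ⬝ᵥ (C *ᵥ p')) := by
    intro C
    simp only [det_updateRow_adj, hadj]
    rw [dotProduct, Finset.mul_sum]
    refine Finset.sum_congr rfl fun i _ => ?_
    simp only [Matrix.mulVec, dotProduct, Finset.mul_sum]
    refine Finset.sum_congr rfl fun k _ => ?_
    ring
  have hfun : (fun t : ℝ => (R (p + t • p')).det) = fun t : ℝ => (A + t • B).det := by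
    funext t
    rw [map_add, _root_.map_smul]
  have hderiv : deriv (fun t : ℝ => (R (p + t • p')).det) 0 = α * (ω ⬝ᵥ (B *ᵥ p')) := by
    rw [hfun, deriv_det_add_smul, hsum]
  -- nonvanishing of α
  set W : Matrix (Fin N) (Fin N) ℝ := Matrix.of fun i j => ω i * p' j with hW
  have hωω : ω ⬝ᵥ ω ≠ 0 := fun h => hω (dotProduct_self_eq_zero.mp h)
  have hpp : p' ⬝ᵥ p' ≠ 0 := fun h => hp' (dotProduct_self_eq_zero.mp h)
  have hWv : ∀ v : Fin N → ℝ, W *ᵥ v = (p' ⬝ᵥ v) • ω := by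
    intro v
    ext i
    simp only [Matrix.mulVec, dotProduct, Pi.smul_apply, smul_eq_mul, hW,
      Matrix.of_apply, Finset.sum_mul, Finset.mul_sum]
    refine Finset.sum_congr rfl fun k _ => ?_
    ring
  have hdetAW : (A + W).det ≠ 0 := by
    intro h
    obtain ⟨v, hv0, hv⟩ := Matrix.exists_mulVec_eq_zero_iff.mpr h
    have hadd : A *ᵥ v + (p' ⬝ᵥ v) • ω = 0 := by
      rw [← hWv, ← Matrix.add_mulVec]
      exact hv
    have hdot := congrArg (fun x => ω ⬝ᵥ x) hadd
    simp only [dotProduct_add, dotProduct_smul, Matrix.dotProduct_mulVec, hωR,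
      zero_dotProduct, dotProduct_zero, zero_add, smul_eq_mul] at hdot
    have hpv : p' ⬝ᵥ v = 0 := by
      rcases mul_eq_zero.mp hdot with h' | h'
      · exact h'
      · exact absurd h' hωω
    have hAv : A *ᵥ v = 0 := by
      rw [hpv, zero_smul, add_zero] at hadd
      exact hadd
    obtain ⟨cv, rfl⟩ := hker v hAv
    rw [dotProduct_smul, smul_eq_mul] at hpv
    rcases mul_eq_zero.mp hpv with h' | h'
    · exact hv0 (by rw [h', zero_smul])
    · exact hpp h'
  have hAW : (A + W).det = α * ((p' ⬝ᵥ p') * (ω ⬝ᵥ ω)) := by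
    have hexp := det_add_smul_expand A W 1
    simp only [one_smul, one_pow, one_mul] at hexp
    rw [hexp, sum_card_le_one]
    · have h0 : (Matrix.of fun i j => if i ∈ (∅ : Finset (Fin N)) then W i j else A i j)
          = A := by
        funext i j
        simp
      have h1 : ∑ i, (Matrix.of fun k j =>
            if k ∈ ({i} : Finset (Fin N)) then W k j else A k j).det
          = α * (ω ⬝ᵥ (W *ᵥ p')) := by
        rw [Finset.sum_congr rfl fun i _ => by rw [piecewise_single_eq]]
        exact hsum W
      rw [h0, hdetA, h1, hWv p', dotProduct_smul, zero_add, smul_eq_mul]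
    · intro s hs
      obtain ⟨i, hi, j, hj, hij⟩ := Finset.one_lt_card.mp (show 1 < s.card by omega)
      set M : Matrix (Fin N) (Fin N) ℝ :=
        Matrix.of fun k l => if k ∈ s then W k l else A k l with hM
      have hMi : M i = ω i • p' := by
        funext l
        simp [hM, hi, hW]
      have hMj : M j = ω j • p' := by
        funext l
        simp [hM, hj, hW]
      have e1 : M = M.updateRow i (ω i • p') := by rw [← hMi, Matrix.updateRow_eq_self]
      have e2 : M.updateRow i p' = (M.updateRow i p').updateRow j (ω j • p') := by
        rw [show (ω j • p' : Fin N → ℝ) = (M.updateRow i p') j by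
          rw [Matrix.updateRow_ne hij.symm, hMj], Matrix.updateRow_eq_self]
      calc M.det = (M.updateRow i (ω i • p')).det := by rw [← e1]
        _ = ω i * (M.updateRow i p').det := Matrix.det_updateRow_smul M i (ω i) p'
        _ = ω i * ((M.updateRow i p').updateRow j (ω j • p')).det := by rw [← e2]
        _ = ω i * (ω j * (((M.updateRow i p').updateRow j p')).det) := by
            rw [Matrix.det_updateRow_smul]
        _ = 0 := by
            rw [Matrix.det_zero_of_row_eq hij (by
              rw [Matrix.updateRow_ne hij, Matrix.updateRow_self, Matrix.updateRow_self])]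
            ring
  have hαne : α ≠ 0 := by
    intro h
    rw [h, zero_mul] at hAW
    exact hdetAW hAW
  rw [hderiv, mul_ne_zero_iff]
  exact ⟨fun h => ⟨hαne, h⟩, fun h => h.2⟩
end

section
/- Let M be an N×N real matrix with nullity 1, left kernel row vector l and right kernel vector r, and suppose l·V·r ≠ 0 for some matrix V. Then for every differentiable path M(t) with M(0) = M, M'(0) = V, and det(M(t)) = 0 for all t near 0, we obtain a contradiction; i.e., no such path exists. (Transversality: the direction V is transverse to the determinantal variety {det = 0} at M.) -/
open Matrix

-- kernel is spanned by r
lemma ker_span_aux {N : ℕ} (hN : 1 ≤ N) (M : Matrix (Fin N) (Fin N) ℝ)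
    (hrank : M.rank = N - 1) (r : Fin N → ℝ) (hr : r ≠ 0) (hMr : M *ᵥ r = 0) :
    ∀ x, M *ᵥ x = 0 → ∃ t : ℝ, x = t • r := by
  have hker : Module.finrank ℝ (LinearMap.ker M.mulVecLin) = 1 := by
    have h := LinearMap.finrank_range_add_finrank_ker M.mulVecLin
    rw [Module.finrank_pi, Fintype.card_fin] at h
    have : M.rank = Module.finrank ℝ (LinearMap.range M.mulVecLin) := rfl
    omega
  have hspan : (ℝ ∙ r) = LinearMap.ker M.mulVecLin := by
    apply Submodule.eq_of_le_of_finrank_le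
    · rw [Submodule.span_singleton_le_iff_mem, LinearMap.mem_ker]
      exact hMr
    · rw [hker, finrank_span_singleton hr]
  intro x hx
  have : x ∈ (ℝ ∙ r) := hspan ▸ (LinearMap.mem_ker.mpr hx)
  obtain ⟨t, ht⟩ := Submodule.mem_span_singleton.mp this
  exact ⟨t, ht.symm⟩

-- adjugate has rank-one structure
lemma adjugate_struct {N : ℕ} (hN : 1 ≤ N) (M : Matrix (Fin N) (Fin N) ℝ)
    (hrank : M.rank = N - 1)
    (l r : Fin N → ℝ) (hl : l ≠ 0) (hr : r ≠ 0)
    (hlM : l ᵥ* M = 0) (hMr : M *ᵥ r = 0) :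
    ∃ β : ℝ, β ≠ 0 ∧ ∀ i j, M.adjugate i j = β * r i * l j := by
  have hdet : M.det = 0 := (exists_mulVec_eq_zero_iff).mp ⟨r, hr, hMr⟩
  have hMadj : M * M.adjugate = 0 := by rw [mul_adjugate, hdet, zero_smul]
  have hadjM : M.adjugate * M = 0 := by rw [adjugate_mul, hdet, zero_smul]
  -- columns of adjugate are multiples of r
  have hcol : ∀ j, ∃ c : ℝ, (fun i => M.adjugate i j) = c • r := by
    intro j
    apply ker_span_aux hN M hrank r hr hMr
    ext k
    have := congrFun (congrFun hMadj k) j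
    simpa [Matrix.mul_apply, Matrix.mulVec, dotProduct] using this
  -- rows of adjugate are multiples of l (via transpose)
  have hrowker : ∀ x, x ᵥ* M = 0 → ∃ t : ℝ, x = t • l := by
    intro x hx
    apply ker_span_aux hN Mᵀ (by rw [rank_transpose]; exact hrank) l hl
    · rw [← vecMul_transpose]; simpa using hlM
    · rw [← vecMul_transpose]; simpa using hx
  have hrow : ∀ i, ∃ d : ℝ, (fun j => M.adjugate i j) = d • l := by
    intro i
    apply hrowker
    ext k
    have := congrFun (congrFun hadjM i) k
    simpa [Matrix.mul_apply, Matrix.vecMul, dotProduct] using this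
  choose c hc using hcol
  choose d hd using hrow
  obtain ⟨i0, hi0⟩ : ∃ i0, r i0 ≠ 0 := Function.ne_iff.mp hr
  refine ⟨d i0 / r i0, ?_, ?_⟩
  · -- need adjugate ≠ 0: construct u not in column space
    -- range of mulVecLin has finrank N - 1 < N
    have hlt : LinearMap.range M.mulVecLin < ⊤ := by
      rw [lt_top_iff_ne_top]
      intro htop
      have : M.rank = N := by
        unfold Matrix.rank
        rw [htop]
        simp [Module.finrank_pi]
      omega
    obtain ⟨u, -, hu⟩ := SetLike.exists_of_lt hlt
    -- det of M with column i0 replaced by u is nonzero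
    have hdet' : (M.updateCol i0 u).det ≠ 0 := by
      rw [Ne, ← exists_mulVec_eq_zero_iff]
      rintro ⟨v, hv, hMv⟩
      have hsplit : ∀ k, (M.updateCol i0 u *ᵥ v) k
          = (M *ᵥ Function.update v i0 0) k + v i0 * u k := by
        intro k
        simp only [Matrix.mulVec, dotProduct, Matrix.updateCol_apply]
        rw [← Finset.sum_erase_add _ _ (Finset.mem_univ i0),
            ← Finset.sum_erase_add _ _ (Finset.mem_univ i0)]
        simp only [if_pos rfl, Function.update_self, mul_zero, add_zero]
        congr 1
        · apply Finset.sum_congr rfl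
          intro x hx
          have hxne : x ≠ i0 := Finset.ne_of_mem_erase hx
          rw [if_neg hxne, Function.update_of_ne hxne]
        · simp [mul_comm]
      by_cases hvi : v i0 = 0
      · have hveq : Function.update v i0 0 = v := by
          ext k; by_cases h : k = i0 <;> simp [h, Function.update_apply, hvi]
        have : M *ᵥ v = 0 := by
          ext k
          have := congrFun hMv k
          rw [hsplit k, hvi, zero_mul, add_zero, hveq] at this
          simpa using this
        obtain ⟨t, ht⟩ := ker_span_aux hN M hrank r hr hMr v this
        have : t = 0 := by
          by_contra ht0
          exact hi0 (by
            have := congrFun ht i0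
            rw [hvi] at this
            rw [Pi.smul_apply, smul_eq_mul, eq_comm, mul_eq_zero] at this
            rcases this with h | h
            · exact absurd h ht0
            · exact h)
        exact hv (by rw [ht, this, zero_smul])
      · apply hu
        have : u = (-(v i0)⁻¹) • (M *ᵥ Function.update v i0 0) := by
          ext k
          have := congrFun hMv k
          rw [hsplit k] at this
          have h0 : (0 : Fin N → ℝ) k = 0 := rfl
          rw [h0] at this
          rw [Pi.smul_apply, smul_eq_mul]
          field_simp
          linarith [this]
        rw [this]
        exact Submodule.smul_mem _ _ (LinearMap.mem_range_self M.mulVecLin _)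
    -- relate to adjugate
    have hcr : (M.updateCol i0 u).det = (M.adjugate *ᵥ u) i0 := by
      rw [← cramer_apply, cramer_eq_adjugate_mulVec]
    intro hβ
    apply hdet'
    rw [hcr]
    simp only [Matrix.mulVec, dotProduct]
    have : ∀ j, M.adjugate i0 j = 0 := by
      intro j
      have h1 := congrFun (hd i0) j
      simp only [Pi.smul_apply, smul_eq_mul] at h1
      have : d i0 = 0 := by
        have := div_eq_zero_iff.mp hβ
        rcases this with h | h
        · exact h
        · exact absurd h hi0
      rw [h1, this, zero_mul]
    simp [this]
  · intro i j
    have h1 := congrFun (hc j) i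
    have h2 := congrFun (hc j) i0
    have h3 := congrFun (hd i0) j
    simp only [Pi.smul_apply, smul_eq_mul] at h1 h2 h3
    -- adj i j = c j * r i ; adj i0 j = c j * r i0 = d i0 * l j
    have hcd : c j * r i0 = d i0 * l j := by rw [← h2, h3]
    rw [h1]
    field_simp
    linear_combination r i * hcd

lemma det_hasDerivAt {N : ℕ} (Mt : ℝ → Matrix (Fin N) (Fin N) ℝ)
    (M V : Matrix (Fin N) (Fin N) ℝ)
    (hE : ∀ i j, HasDerivAt (fun t => Mt t i j) (V i j) 0) (h0 : Mt 0 = M) :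
    HasDerivAt (fun t => (Mt t).det)
      (∑ i, (M.updateCol i fun k => V k i).det) 0 := by
  have hprod : ∀ (i : Fin N) (σ : Equiv.Perm (Fin N)),
      (∏ j, (M.updateCol i fun k => V k i) (σ j) j)
      = V (σ i) i * ∏ j ∈ Finset.univ.erase i, M (σ j) j := by
    intro i σ
    rw [← Finset.mul_prod_erase _ _ (Finset.mem_univ i)]
    congr 1
    · simp [updateCol_apply]
    · apply Finset.prod_congr rfl
      intro j hj
      rw [updateCol_apply, if_neg (Finset.ne_of_mem_erase hj)]
  have key : (∑ i, (M.updateCol i fun k => V k i).det)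
      = ∑ σ : Equiv.Perm (Fin N), (((Equiv.Perm.sign σ : ℤ) : ℝ)
          * ∑ i, (∏ j ∈ Finset.univ.erase i, Mt 0 (σ j) j) • V (σ i) i) := by
    simp_rw [det_apply', hprod, h0, Finset.mul_sum, smul_eq_mul]
    rw [Finset.sum_comm]
    apply Finset.sum_congr rfl; intro σ _
    apply Finset.sum_congr rfl; intro i _
    ring
  rw [key]
  have : (fun t => (Mt t).det)
      = fun t => ∑ σ : Equiv.Perm (Fin N),
          ((Equiv.Perm.sign σ : ℤ) : ℝ) * ∏ i, Mt t (σ i) i := by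
    funext t; exact det_apply' (Mt t)
  rw [this]
  apply HasDerivAt.fun_sum
  intro σ _
  exact (HasDerivAt.fun_finsetProd (fun i _ => hE (σ i) i)).const_mul _

/-- transversality: if `M` has nullity 1 with kernel vectors `l, r`
and `l·V·r ≠ 0`, then there is no differentiable path `M(t)` with `M(0) = M`,
`M'(0) = V` and `det(M(t)) = 0` for all `t` near 0. -/
theorem no_singular_path_of_transverse {N : ℕ} (hN : 1 ≤ N)
    (M V : Matrix (Fin N) (Fin N) ℝ) (hrank : M.rank = N - 1)
    (l r : Fin N → ℝ) (hl : l ≠ 0) (hr : r ≠ 0)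
    (hlM : l ᵥ* M = 0) (hMr : M *ᵥ r = 0)
    (hV : l ⬝ᵥ (V *ᵥ r) ≠ 0)
    (Mt : ℝ → Matrix (Fin N) (Fin N) ℝ)
    (hdiff : ∀ i j, DifferentiableAt ℝ (fun t => Mt t i j) 0)
    (h0 : Mt 0 = M)
    (h1 : ∀ i j, deriv (fun t => Mt t i j) 0 = V i j)
    (hsing : ∀ᶠ t in nhds (0 : ℝ), (Mt t).det = 0) :
    False := by
  obtain ⟨β, hβ, hadj⟩ := adjugate_struct hN M hrank l r hl hr hlM hMr
  have hE : ∀ i j, HasDerivAt (fun t => Mt t i j) (V i j) 0 := by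
    intro i j
    have := (hdiff i j).hasDerivAt
    rwa [h1 i j] at this
  have hD := det_hasDerivAt Mt M V hE h0
  -- deriv is zero since det is eventually 0
  have hzero : (∑ i, (M.updateCol i fun k => V k i).det) = 0 := by
    rw [← hD.deriv]
    have heq : (fun t => (Mt t).det) =ᶠ[nhds (0 : ℝ)] fun _ => (0 : ℝ) := hsing
    rw [heq.deriv_eq]
    simp
  -- compute the sum via adjugate
  have hsum : (∑ i, (M.updateCol i fun k => V k i).det)
      = β * (l ⬝ᵥ (V *ᵥ r)) := by
    have h2 : ∀ i, (M.updateCol i fun k => V k i).det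
        = ∑ j, M.adjugate i j * V j i := by
      intro i
      rw [← cramer_apply, cramer_eq_adjugate_mulVec]
      simp [Matrix.mulVec, dotProduct]
    simp_rw [h2, hadj, dotProduct, Matrix.mulVec, dotProduct, Finset.mul_sum]
    rw [Finset.sum_comm]
    apply Finset.sum_congr rfl; intro j _
    apply Finset.sum_congr rfl; intro i _
    ring
  rw [hsum] at hzero
  rcases mul_eq_zero.mp hzero with h | h
  · exact hβ h
  · exact hV h
end

section
/- Let R : ℝ^N → Mat(N×N, ℝ) be linear and suppose p(t) is a differentiable path in ℝ^N with det(R(p(t))) = 0 for all t, p(0) = p, and nullity(R(p)) = 1 with stress ω (left kernel) and flex p′ (right kernel). Then ω · R(p'(0)) · p′ = 0. In particular, if p'(0) = p′ (the path's velocity is the unique infinitesimal flex), then the prestress-stability quantity ω R(p′) p′ vanishes. -/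
open Matrix

namespace FlexAux

/-- determinant as a continuous multilinear map in the rows -/
noncomputable def detCML (N : ℕ) :
    ContinuousMultilinearMap ℝ (fun _ : Fin N => (Fin N → ℝ)) ℝ :=
  MultilinearMap.mkContinuous
    (Matrix.detRowAlternating (R := ℝ) (n := Fin N)).toMultilinearMap
    (Nat.factorial N) (by
      intro m
      have hdet : (Matrix.detRowAlternating (R := ℝ) (n := Fin N)).toMultilinearMap m
          = Matrix.det (Matrix.of m) := rfl
      rw [hdet, Matrix.det_apply]
      refine (norm_sum_le _ _).trans ?_
      have key : ∀ σ : Equiv.Perm (Fin N),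
          ‖Equiv.Perm.sign σ • ∏ i, Matrix.of m (σ i) i‖ ≤ ∏ i, ‖m i‖ := by
        intro σ
        have h1 : ‖Equiv.Perm.sign σ • ∏ i, Matrix.of m (σ i) i‖
            = ‖∏ i, m (σ i) i‖ := by
          rcases Int.units_eq_one_or (Equiv.Perm.sign σ) with h | h <;>
            simp [h, Matrix.of_apply]
        rw [h1]
        calc ‖∏ i, m (σ i) i‖ = ∏ i, ‖m (σ i) i‖ := by
              rw [Real.norm_eq_abs, Finset.abs_prod]; rfl
          _ ≤ ∏ i, ‖m (σ i)‖ := Finset.prod_le_prod (fun i _ => norm_nonneg _)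
              (fun i _ => norm_le_pi_norm (m (σ i)) i)
          _ = ∏ i, ‖m i‖ := Equiv.prod_comp σ (fun j => ‖m j‖)
      calc ∑ σ : Equiv.Perm (Fin N), ‖Equiv.Perm.sign σ • ∏ i, Matrix.of m (σ i) i‖
          ≤ ∑ _σ : Equiv.Perm (Fin N), ∏ i, ‖m i‖ := Finset.sum_le_sum fun σ _ => key σ
        _ = (Nat.factorial N : ℝ) * ∏ i, ‖m i‖ := by
            simp [Finset.sum_const, Fintype.card_perm])

theorem detCML_apply {N : ℕ} (A : Matrix (Fin N) (Fin N) ℝ) :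
    detCML N (fun i j => A i j) = A.det := rfl

theorem det_updateRow_eq_sum {N : ℕ} (M : Matrix (Fin N) (Fin N) ℝ) (k : Fin N)
    (b : Fin N → ℝ) :
    (M.updateRow k b).det = ∑ i, b i * M.adjugate i k := by
  classical
  set L := (Matrix.detRowAlternating (R := ℝ) (n := Fin N)).toMultilinearMap.toLinearMap M k
    with hLdef
  have hL : ∀ v, L v = (M.updateRow k v).det := fun v => rfl
  have hb : b = ∑ i, b i • (Pi.single i 1 : Fin N → ℝ) := by
    ext j
    rw [Finset.sum_apply]
    simp [Pi.single_apply, eq_comm]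
  calc (M.updateRow k b).det = L b := (hL b).symm
    _ = L (∑ i, b i • (Pi.single i 1 : Fin N → ℝ)) := by rw [← hb]
    _ = ∑ i, b i * L (Pi.single i 1) := by
        rw [map_sum]
        simp [smul_eq_mul]
    _ = ∑ i, b i * M.adjugate i k := by
        refine Finset.sum_congr rfl fun i _ => ?_
        rw [hL, Matrix.adjugate_apply]

theorem sum_det_update_eq_zero {N : ℕ}
    (R : (Fin N → ℝ) →ₗ[ℝ] Matrix (Fin N) (Fin N) ℝ)
    (p : ℝ → (Fin N → ℝ)) (hdiff : DifferentiableAt ℝ p 0)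
    (hsing : ∀ t, (R (p t)).det = 0) :
    ∑ i, ((R (p 0)).updateRow i (R (deriv p 0) i)).det = 0 := by
  classical
  set Rlin : (Fin N → ℝ) →ₗ[ℝ] (Fin N → Fin N → ℝ) :=
    { toFun := fun v i j => R v i j
      map_add' := fun x y => by ext i j; simp [Matrix.add_apply]
      map_smul' := fun c x => by ext i j; simp [Matrix.smul_apply] } with hRlin
  have hRd : HasDerivAt (fun t => Rlin (p t)) (Rlin (deriv p 0)) 0 := by
    have := (Rlin.toContinuousLinearMap.hasFDerivAt
      (x := p 0)).comp_hasDerivAt 0 hdiff.hasDerivAt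
    exact this
  have hD : HasDerivAt (fun t => detCML N (Rlin (p t)))
      ((detCML N).linearDeriv (Rlin (p 0)) (Rlin (deriv p 0))) 0 :=
    ((detCML N).hasFDerivAt (x := Rlin (p 0))).comp_hasDerivAt 0 hRd
  have hconst : (fun t => detCML N (Rlin (p t))) = fun _ => (0 : ℝ) := by
    funext t
    exact (detCML_apply (R (p t))).trans (hsing t)
  have hzero : (detCML N).linearDeriv (Rlin (p 0)) (Rlin (deriv p 0)) = 0 := by
    have h2 : HasDerivAt (fun _ : ℝ => (0 : ℝ)) 0 0 := hasDerivAt_const 0 0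
    rw [hconst] at hD
    exact hD.unique h2
  have hexp := (detCML N).linearDeriv_apply (Rlin (p 0)) (Rlin (deriv p 0))
  rw [hzero] at hexp
  have : ∀ i, detCML N (Function.update (Rlin (p 0)) i (Rlin (deriv p 0) i))
      = ((R (p 0)).updateRow i (R (deriv p 0) i)).det := by
    intro i
    rfl
  rw [← Finset.sum_congr rfl fun i _ => this i]
  exact hexp.symm

end FlexAux

open FlexAux

/-- if `p(t)` is a differentiable path of configurations with
`det(R(p(t))) = 0` for all `t`, `p(0) = p₀`, and `R(p₀)` has nullity 1 with stress
`ω` and flex `p′`, then `ω · R(p'(0)) · p′ = 0`; in particular, if the path's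
velocity is the flex, the prestress quantity `ω R(p′) p′` vanishes. -/
theorem flex_path_kills_prestress {N : ℕ} (hN : 1 ≤ N)
    (R : (Fin N → ℝ) →ₗ[ℝ] Matrix (Fin N) (Fin N) ℝ)
    (p : ℝ → (Fin N → ℝ)) (hdiff : DifferentiableAt ℝ p 0)
    (hsing : ∀ t, (R (p t)).det = 0)
    (p₀ : Fin N → ℝ) (h0 : p 0 = p₀)
    (hrank : (R p₀).rank = N - 1)
    (ω p' : Fin N → ℝ) (hω : ω ≠ 0) (hp' : p' ≠ 0)
    (hωR : ω ᵥ* (R p₀) = 0) (hRp' : (R p₀) *ᵥ p' = 0) :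
    ω ⬝ᵥ ((R (deriv p 0)) *ᵥ p') = 0
    ∧ (deriv p 0 = p' → ω ⬝ᵥ ((R p') *ᵥ p') = 0) := by
  classical
  set M := R p₀ with hM
  have hdetM : M.det = 0 := by rw [hM, ← h0]; exact hsing 0
  have hNfin : Module.finrank ℝ (Fin N → ℝ) = N := Module.finrank_fin_fun ℝ
  -- right kernel is spanned by p'
  have hker : LinearMap.ker M.mulVecLin = Submodule.span ℝ {p'} := by
    have h1 : Module.finrank ℝ (LinearMap.range M.mulVecLin) = N - 1 := hrank
    have h2 := LinearMap.finrank_range_add_finrank_ker M.mulVecLin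
    rw [hNfin, h1] at h2
    have hkfin : Module.finrank ℝ (LinearMap.ker M.mulVecLin) = 1 := by omega
    have hle : Submodule.span ℝ {p'} ≤ LinearMap.ker M.mulVecLin := by
      rw [Submodule.span_singleton_le_iff_mem]
      exact LinearMap.mem_ker.mpr (by rw [Matrix.mulVecLin_apply]; exact hRp')
    exact (Submodule.eq_of_le_of_finrank_le hle
      (by rw [hkfin, finrank_span_singleton hp'])).symm
  -- left kernel is spanned by ω
  have hrankT : Mᵀ.rank = N - 1 := by rw [Matrix.rank_transpose]; exact hrank
  have hkerT : LinearMap.ker Mᵀ.mulVecLin = Submodule.span ℝ {ω} := by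
    have h1 : Module.finrank ℝ (LinearMap.range Mᵀ.mulVecLin) = N - 1 := hrankT
    have h2 := LinearMap.finrank_range_add_finrank_ker Mᵀ.mulVecLin
    rw [hNfin, h1] at h2
    have hkfin : Module.finrank ℝ (LinearMap.ker Mᵀ.mulVecLin) = 1 := by omega
    have hle : Submodule.span ℝ {ω} ≤ LinearMap.ker Mᵀ.mulVecLin := by
      rw [Submodule.span_singleton_le_iff_mem]
      exact LinearMap.mem_ker.mpr
        (by rw [Matrix.mulVecLin_apply, Matrix.mulVec_transpose]; exact hωR)
    exact (Submodule.eq_of_le_of_finrank_le hle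
      (by rw [hkfin, finrank_span_singleton hω])).symm
  -- columns of the adjugate lie in the right kernel
  have hcol : ∀ j, ∃ a : ℝ, (fun i => M.adjugate i j) = a • p' := by
    intro j
    have hmul := Matrix.mul_adjugate M
    rw [hdetM, zero_smul] at hmul
    have hmem : (fun i => M.adjugate i j) ∈ LinearMap.ker M.mulVecLin := by
      rw [LinearMap.mem_ker, Matrix.mulVecLin_apply]
      ext i
      have h2 := congr_fun (congr_fun hmul i) j
      rw [Matrix.mul_apply] at h2
      simpa [Matrix.mulVec, dotProduct] using h2
    rw [hker, Submodule.mem_span_singleton] at hmem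
    obtain ⟨a, ha⟩ := hmem
    exact ⟨a, ha.symm⟩
  choose c hc using hcol
  have hadj : ∀ i j, M.adjugate i j = c j * p' i := by
    intro i j
    have := congr_fun (hc j) i
    simpa [smul_eq_mul] using this
  -- c lies in the left kernel
  obtain ⟨i₁, hi₁⟩ : ∃ i, p' i ≠ 0 := by
    by_contra h; push_neg at h; exact hp' (funext h)
  have hcM : c ᵥ* M = 0 := by
    have hmul := Matrix.adjugate_mul M
    rw [hdetM, zero_smul] at hmul
    ext j
    have h2 := congr_fun (congr_fun hmul i₁) j
    simp only [Matrix.mul_apply, Matrix.zero_apply] at h2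
    have h3 : (∑ k, c k * M k j) * p' i₁ = 0 := by
      rw [Finset.sum_mul, ← h2]
      refine Finset.sum_congr rfl fun k _ => ?_
      rw [hadj]; ring
    rcases mul_eq_zero.mp h3 with h | h
    · simpa [Matrix.vecMul, dotProduct] using h
    · exact absurd h hi₁
  obtain ⟨α, hα⟩ : ∃ a : ℝ, c = a • ω := by
    have hmem : c ∈ LinearMap.ker Mᵀ.mulVecLin := by
      rw [LinearMap.mem_ker, Matrix.mulVecLin_apply, Matrix.mulVec_transpose]; exact hcM
    rw [hkerT, Submodule.mem_span_singleton] at hmem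
    obtain ⟨a, ha⟩ := hmem
    exact ⟨a, ha.symm⟩
  -- the adjugate is nonzero, so α ≠ 0
  set V := Submodule.span ℝ (Set.range M) with hV
  have hVfin : Module.finrank ℝ V = N - 1 := by
    have h1 := Matrix.rank_eq_finrank_span_cols Mᵀ
    change Mᵀ.rank = Module.finrank ℝ (Submodule.span ℝ (Set.range M)) at h1
    rw [hV, ← h1]
    exact hrankT
  obtain ⟨j₀, hj₀⟩ : ∃ j, ω j ≠ 0 := by
    by_contra h; push_neg at h; exact hω (funext h)
  obtain ⟨u, hu⟩ : ∃ u, u ∉ V := by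
    by_contra h; push_neg at h
    have htop : V = ⊤ := Submodule.eq_top_iff'.mpr h
    rw [htop, finrank_top, hNfin] at hVfin
    omega
  set M' := M.updateRow j₀ u with hM'
  have hsum : ∑ k, ω k • M k = 0 := by
    ext j
    rw [Finset.sum_apply]
    have := congr_fun hωR j
    simpa [Matrix.vecMul, dotProduct] using this
  have hVtop : Submodule.span ℝ (Set.range M') = ⊤ := by
    set V' := Submodule.span ℝ (Set.range M') with hV'
    have hrow : ∀ i, i ≠ j₀ → M i ∈ V' := fun i hi =>
      Submodule.subset_span ⟨i, by rw [hM', Matrix.updateRow_ne hi]⟩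
    have huV' : u ∈ V' := Submodule.subset_span ⟨j₀, by rw [hM', Matrix.updateRow_self]⟩
    have hj₀row : M j₀ ∈ V' := by
      have h1 : ω j₀ • M j₀ + ∑ k ∈ Finset.univ.erase j₀, ω k • M k = 0 := by
        exact (Finset.add_sum_erase _ (fun k => ω k • M k) (Finset.mem_univ j₀)).trans hsum
      have h2 : (∑ k ∈ Finset.univ.erase j₀, ω k • M k) ∈ V' :=
        Submodule.sum_mem _ fun k hk =>
          Submodule.smul_mem _ _ (hrow k (Finset.ne_of_mem_erase hk))
      have h3 : ω j₀ • M j₀ ∈ V' := by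
        have h4 : ω j₀ • M j₀ = -∑ k ∈ Finset.univ.erase j₀, ω k • M k := by
          rw [eq_neg_iff_add_eq_zero]; exact h1
        rw [h4]; exact Submodule.neg_mem _ h2
      have h5 := Submodule.smul_mem V' (ω j₀)⁻¹ h3
      rwa [smul_smul, inv_mul_cancel₀ hj₀, one_smul] at h5
    have hVle : V ≤ V' := Submodule.span_le.mpr (by
      rintro x ⟨i, rfl⟩
      by_cases hi : i = j₀
      · subst hi; exact hj₀row
      · exact hrow i hi)
    have hlt : V < V' := lt_of_le_of_ne hVle fun h => hu (h ▸ huV')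
    have h6 := Submodule.finrank_lt_finrank_of_lt hlt
    rw [hVfin] at h6
    have h7 := Submodule.finrank_le V'
    rw [hNfin] at h7
    exact Submodule.eq_top_of_finrank_eq (by omega)
  have hdetM' : M'.det ≠ 0 := by
    have hsurj : Function.Surjective M'.vecMul := by
      intro y
      have hy : y ∈ Submodule.span ℝ (Set.range M') := hVtop ▸ Submodule.mem_top
      change y ∈ Submodule.span ℝ (Set.range M'.row) at hy
      rw [← range_vecMulLinear] at hy
      obtain ⟨x, hx⟩ := hy
      exact ⟨x, hx⟩
    have hunit := Matrix.vecMul_surjective_iff_isUnit.mp hsurj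
    exact ((Matrix.isUnit_iff_isUnit_det M').mp hunit).ne_zero
  have hαne : α ≠ 0 := by
    intro h0α
    have hc0 : c = 0 := by rw [hα, h0α, zero_smul]
    refine hdetM' ?_
    rw [hM', det_updateRow_eq_sum]
    refine Finset.sum_eq_zero fun i _ => ?_
    rw [hadj, hc0]
    simp
  -- main computation
  set B := R (deriv p 0) with hB
  have hkey := sum_det_update_eq_zero R p hdiff hsing
  rw [h0] at hkey
  have hcomp : ∀ k : Fin N, (M.updateRow k (B k)).det = c k * ∑ i, B k i * p' i := by
    intro k
    rw [det_updateRow_eq_sum, Finset.mul_sum]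
    refine Finset.sum_congr rfl fun i _ => ?_
    rw [hadj]; ring
  rw [Finset.sum_congr rfl fun k _ => hcomp k] at hkey
  have hfin : α * (ω ⬝ᵥ (B *ᵥ p')) = 0 := by
    rw [← hkey]
    simp only [dotProduct, Matrix.mulVec, hα, Finset.mul_sum, Pi.smul_apply,
      smul_eq_mul]
    refine Finset.sum_congr rfl fun k _ => Finset.sum_congr rfl fun x _ => by ring
  have h1 : ω ⬝ᵥ (B *ᵥ p') = 0 := by
    rcases mul_eq_zero.mp hfin with h | h
    · exact absurd h hαne
    · exact h
  refine ⟨h1, fun hdp => ?_⟩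
  rw [hB, hdp] at h1
  exact h1
end
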